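/- Let Ω ⊆ ℂ^n be open, let ρ : Ω → ℝ be of class C², and let ξ ∈ Ω be a point at which the Levi form of ρ is positive definite, i.e. L_ρ(ξ)(w) > 0 for every w ∈ ℂ^n with w ≠ 0. Let F be the Levi polynomial of ρ at ξ. Then there exists ε with 0 < ε < 1/2 such that the closed ball {z : |z−ξ| ≤ 2ε} is contained in Ω and Re F(z) ≥ ρ(ξ) − ρ(z) + 2ε·|z−ξ|² for all z with |z−ξ| ≤ 2ε. -/

import Mathlib

/-!
With `h = z - ξ`, expanding the Wirtinger derivatives gives
`Re F(z) = -Dρ(ξ) h - ½ D²ρ(ξ)(h, h) + L_ρ(ξ)(h)`. By the second-order Taylor formula the first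
two terms are `ρ(ξ) - ρ(z) + o(‖h‖²)`, while the Levi form, being positive, continuous and
2-homogeneous, is at least `c ‖h‖²` (its minimum on the unit sphere). So any `ε ≤ c / 4` for which
the Taylor remainder is at most `(c / 2) ‖h‖²` on the `2ε`-ball inside `Ω` works.
-/

open Complex Metric

noncomputable section

/-- The Levi form of `ρ` at `ξ`, evaluated at `w`:
`L_ρ(ξ)(w) = (1/4)·(D²ρ(ξ)(w,w) + D²ρ(ξ)(iw,iw))`. -/
def leviForm {n : ℕ} (ρ : EuclideanSpace ℂ (Fin n) → ℝ)
    (ξ w : EuclideanSpace ℂ (Fin n)) : ℝ :=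
  (1 / 4) * (fderiv ℝ (fderiv ℝ ρ) ξ w w
    + fderiv ℝ (fderiv ℝ ρ) ξ (Complex.I • w) (Complex.I • w))

/-- `j`-th standard basis vector of `ℂⁿ`. -/
def basisVec {n : ℕ} (j : Fin n) : EuclideanSpace ℂ (Fin n) :=
  EuclideanSpace.single j 1

/-- Wirtinger derivative `∂ρ/∂z_j` at `ξ`: `(1/2)(∂ρ/∂x_j − i ∂ρ/∂y_j)`,
expressed through real directional derivatives in the directions `e_j` and `i·e_j`. -/
def wirt1 {n : ℕ} (ρ : EuclideanSpace ℂ (Fin n) → ℝ)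
    (ξ : EuclideanSpace ℂ (Fin n)) (j : Fin n) : ℂ :=
  (1 / 2 : ℂ) * ((fderiv ℝ ρ ξ (basisVec j) : ℝ)
    - Complex.I * ((fderiv ℝ ρ ξ (Complex.I • basisVec j) : ℝ) : ℂ))

/-- Second Wirtinger derivative `∂²ρ/∂z_j∂z_k` at `ξ`:
`(1/4)(∂²_{x_j x_k} − ∂²_{y_j y_k} − i(∂²_{y_j x_k} + ∂²_{x_j y_k}))ρ(ξ)`,
expressed through the second real Fréchet derivative. -/
def wirt2 {n : ℕ} (ρ : EuclideanSpace ℂ (Fin n) → ℝ)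
    (ξ : EuclideanSpace ℂ (Fin n)) (j k : Fin n) : ℂ :=
  (1 / 4 : ℂ) * (((fderiv ℝ (fderiv ℝ ρ) ξ (basisVec j) (basisVec k) : ℝ) : ℂ)
    - ((fderiv ℝ (fderiv ℝ ρ) ξ (Complex.I • basisVec j) (Complex.I • basisVec k) : ℝ) : ℂ)
    - Complex.I * (((fderiv ℝ (fderiv ℝ ρ) ξ (Complex.I • basisVec j) (basisVec k) : ℝ) : ℂ)
      + ((fderiv ℝ (fderiv ℝ ρ) ξ (basisVec j) (Complex.I • basisVec k) : ℝ) : ℂ)))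

/-- The Levi polynomial of `ρ` at `ξ`:
`F(z) = −2·Σ_j (∂ρ/∂z_j)(ξ)(z_j−ξ_j) − Σ_{j,k} (∂²ρ/∂z_j∂z_k)(ξ)(z_j−ξ_j)(z_k−ξ_k)`. -/
def leviPoly {n : ℕ} (ρ : EuclideanSpace ℂ (Fin n) → ℝ)
    (ξ z : EuclideanSpace ℂ (Fin n)) : ℂ :=
  (-2 : ℂ) * ∑ j, wirt1 ρ ξ j * (z j - ξ j)
    - ∑ j, ∑ k, wirt2 ρ ξ j k * (z j - ξ j) * (z k - ξ k)

open Filter Topology Asymptotics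

section Analysis

variable {E F : Type*} [NormedAddCommGroup E] [NormedSpace ℝ E]
  [NormedAddCommGroup F] [NormedSpace ℝ F]

theorem exists_pos_mul_sq_norm_le_of_homogeneous [ProperSpace E] {q : E → ℝ} (hq : Continuous q)
    (hsmul : ∀ (t : ℝ) (v : E), q (t • v) = t ^ 2 * q v) (hpos : ∀ v, v ≠ 0 → 0 < q v) :
    ∃ c > 0, ∀ v, c * ‖v‖ ^ 2 ≤ q v := by
  have hq0 : q 0 = 0 := by simpa using hsmul 0 0
  rcases subsingleton_or_nontrivial E with hE | hE
  · exact ⟨1, one_pos, fun v => by simp [Subsingleton.elim v 0, hq0]⟩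
  obtain ⟨u, hu, hmin⟩ := (isCompact_sphere (0 : E) 1).exists_isMinOn
    (NormedSpace.sphere_nonempty.2 zero_le_one) hq.continuousOn
  refine ⟨q u, hpos u (ne_zero_of_mem_unit_sphere ⟨u, hu⟩), fun v => ?_⟩
  rcases eq_or_ne v 0 with rfl | hv
  · simp [hq0]
  have hnv : ‖v‖ ≠ 0 := norm_ne_zero_iff.2 hv
  have hunit : ‖v‖⁻¹ • v ∈ sphere (0 : E) 1 := by simp [norm_smul, hnv]
  calc q u * ‖v‖ ^ 2 ≤ q (‖v‖⁻¹ • v) * ‖v‖ ^ 2 := by gcongr; exact hmin hunit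
    _ = q v := by rw [hsmul, inv_pow, mul_right_comm, inv_mul_cancel₀ (pow_ne_zero 2 hnv), one_mul]

theorem hasFDerivAt_half_apply_sub_self {Q : E →L[ℝ] E →L[ℝ] F} (hQ : ∀ u v, Q u v = Q v u)
    (x y : E) : HasFDerivAt (fun y => (1 / 2 : ℝ) • Q (y - x) (y - x)) (Q (y - x)) y := by
  have hsub := (hasFDerivAt_id (𝕜 := ℝ) y).sub_const x
  refine (((Q.hasFDerivAt.comp y hsub).clm_apply hsub).const_smul (1 / 2 : ℝ)).congr_fderiv ?_
  ext v
  simp only [smul_apply, add_apply, ContinuousLinearMap.comp_apply, ContinuousLinearMap.flip_apply,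
    ContinuousLinearMap.id_apply, Function.comp_apply, id, hQ v (y - x)]
  module

theorem ContDiffAt.isLittleO_taylor_two {f : E → F} {x : E} (hf : ContDiffAt ℝ 2 f x) :
    (fun z => f z - f x - fderiv ℝ f x (z - x)
        - (1 / 2 : ℝ) • fderiv ℝ (fderiv ℝ f) x (z - x) (z - x))
      =o[𝓝 x] fun z => ‖z - x‖ ^ 2 := by
  set Q := fderiv ℝ (fderiv ℝ f) x
  have hQ : HasFDerivAt (fderiv ℝ f) Q x :=
    ((hf.fderiv_right le_rfl).differentiableAt one_ne_zero).hasFDerivAt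
  have hsymm : ∀ u v, Q u v = Q v u := (hf.isSymmSndFDerivAt (by simp)).eq
  have hdiff : ∀ᶠ y in 𝓝 x, DifferentiableAt ℝ f y :=
    (hf.eventually (by simp)).mono fun y hy => hy.differentiableAt two_ne_zero
  refine IsLittleO.of_bound fun c hc => ?_
  obtain ⟨δ, hδ, hball⟩ := Metric.eventually_nhds_iff_ball.1 (hdiff.and (hQ.isLittleO.bound hc))
  filter_upwards [ball_mem_nhds x hδ] with z hz
  -- By symmetry of `Q`, the derivative of the remainder `G` at `y` is `f' y - f' x - Q (y - x)`.
  set G : E → F := fun y => f y - fderiv ℝ f x (y - x) - (1 / 2 : ℝ) • Q (y - x) (y - x)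
  have hsub : closedBall x ‖z - x‖ ⊆ ball x δ :=
    closedBall_subset_ball (by rwa [← dist_eq_norm, ← mem_ball])
  have hG : ∀ y ∈ closedBall x ‖z - x‖,
      HasFDerivWithinAt G (fderiv ℝ f y - fderiv ℝ f x - Q (y - x)) (closedBall x ‖z - x‖) y := by
    intro y hy
    have hlin : HasFDerivAt (fun y => fderiv ℝ f x (y - x)) (fderiv ℝ f x) y :=
      ((fderiv ℝ f x).hasFDerivAt.comp y
        ((hasFDerivAt_id (𝕜 := ℝ) y).sub_const x)).congr_fderiv (by simp)
    exact (((hball y (hsub hy)).1.hasFDerivAt.sub hlin).sub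
      (hasFDerivAt_half_apply_sub_self hsymm x y)).hasFDerivWithinAt
  have hbound : ∀ y ∈ closedBall x ‖z - x‖,
      ‖fderiv ℝ f y - fderiv ℝ f x - Q (y - x)‖ ≤ c * ‖z - x‖ := by
    intro y hy
    calc _ ≤ c * ‖y - x‖ := (hball y (hsub hy)).2
      _ ≤ c * ‖z - x‖ := by gcongr; rwa [← dist_eq_norm, ← mem_closedBall]
  have hmvt := (convex_closedBall x ‖z - x‖).norm_image_sub_le_of_norm_hasFDerivWithin_le hG
    hbound (mem_closedBall_self (norm_nonneg _)) (y := z) (by simp [dist_eq_norm])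
  have hGx : G x = f x := by simp [G]
  rw [hGx] at hmvt
  rw [norm_pow, norm_norm, sq, ← mul_assoc]
  convert hmvt using 2
  simp only [G]
  abel

end Analysis

section Levi

variable {n : ℕ}

theorem ContinuousLinearMap.apply_eq_sum_basisVec {M : Type*} [AddCommGroup M] [Module ℝ M]
    [TopologicalSpace M] (T : EuclideanSpace ℂ (Fin n) →L[ℝ] M) (w : EuclideanSpace ℂ (Fin n)) :
    T w = ∑ j, ((w j).re • T (basisVec j) + (w j).im • T (I • basisVec j)) := by
  have hw : w = ∑ j, ((w j).re • basisVec j + (w j).im • (I • basisVec j)) := by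
    ext k
    simp [basisVec, Finset.sum_apply, Pi.single_apply, mul_comm I, Finset.sum_add_distrib]
  conv_lhs => rw [hw]
  simp only [map_sum, map_add, map_smul]

theorem ContinuousLinearMap.apply_apply_eq_sum_basisVec
    (P : EuclideanSpace ℂ (Fin n) →L[ℝ] EuclideanSpace ℂ (Fin n) →L[ℝ] ℝ)
    (u v : EuclideanSpace ℂ (Fin n)) :
    P u v = ∑ j, ∑ k,
      ((u j).re * (v k).re * P (basisVec j) (basisVec k)
      + (u j).re * (v k).im * P (basisVec j) (I • basisVec k)
      + (u j).im * (v k).re * P (I • basisVec j) (basisVec k)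
      + (u j).im * (v k).im * P (I • basisVec j) (I • basisVec k)) := by
  rw [P.apply_eq_sum_basisVec u]
  simp only [sum_apply, add_apply, smul_apply, smul_eq_mul,
    (P _).apply_eq_sum_basisVec v, Finset.mul_sum, ← Finset.sum_add_distrib]
  refine Finset.sum_congr rfl fun j _ => Finset.sum_congr rfl fun k _ => ?_
  ring

theorem re_two_mul_sum_wirt1_mul (ρ : EuclideanSpace ℂ (Fin n) → ℝ)
    (ξ h : EuclideanSpace ℂ (Fin n)) :
    (2 * ∑ j, wirt1 ρ ξ j * h j).re = fderiv ℝ ρ ξ h := by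
  rw [(fderiv ℝ ρ ξ).apply_eq_sum_basisVec h, Finset.mul_sum, re_sum]
  refine Finset.sum_congr rfl fun j _ => ?_
  simp only [wirt1, mul_re, mul_im, sub_re, sub_im, ofReal_re, ofReal_im, I_re, I_im, one_div,
    inv_re, inv_im, re_ofNat, im_ofNat, normSq_ofNat, smul_eq_mul]
  ring

theorem re_sum_wirt2_mul (ρ : EuclideanSpace ℂ (Fin n) → ℝ) (ξ h : EuclideanSpace ℂ (Fin n)) :
    (∑ j, ∑ k, wirt2 ρ ξ j k * h j * h k).re
      = (1 / 4) * (fderiv ℝ (fderiv ℝ ρ) ξ h h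
        - fderiv ℝ (fderiv ℝ ρ) ξ (I • h) (I • h)) := by
  rw [(fderiv ℝ (fderiv ℝ ρ) ξ).apply_apply_eq_sum_basisVec h h,
    (fderiv ℝ (fderiv ℝ ρ) ξ).apply_apply_eq_sum_basisVec (I • h) (I • h)]
  simp only [re_sum, ← Finset.sum_sub_distrib, Finset.mul_sum]
  refine Finset.sum_congr rfl fun j _ => Finset.sum_congr rfl fun k _ => ?_
  simp only [wirt2, mul_re, mul_im, add_re, add_im, sub_re, sub_im, ofReal_re, ofReal_im, I_re,
    I_im, one_div, inv_re, inv_im, re_ofNat, im_ofNat, normSq_ofNat, PiLp.smul_apply, smul_eq_mul]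
  ring

theorem re_leviPoly (ρ : EuclideanSpace ℂ (Fin n) → ℝ) (ξ z : EuclideanSpace ℂ (Fin n)) :
    (leviPoly ρ ξ z).re = -fderiv ℝ ρ ξ (z - ξ)
      - (1 / 2) * fderiv ℝ (fderiv ℝ ρ) ξ (z - ξ) (z - ξ) + leviForm ρ ξ (z - ξ) := by
  have h := re_two_mul_sum_wirt1_mul ρ ξ (z - ξ)
  have h2 := re_sum_wirt2_mul ρ ξ (z - ξ)
  simp only [PiLp.sub_apply] at h h2
  rw [leviPoly, sub_re, neg_mul, neg_re, h, h2, leviForm]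
  ring

theorem leviForm_smul (ρ : EuclideanSpace ℂ (Fin n) → ℝ) (ξ : EuclideanSpace ℂ (Fin n)) (t : ℝ)
    (w : EuclideanSpace ℂ (Fin n)) : leviForm ρ ξ (t • w) = t ^ 2 * leviForm ρ ξ w := by
  simp only [leviForm, smul_comm I t w, map_smul, smul_apply, smul_eq_mul]
  ring

theorem continuous_leviForm (ρ : EuclideanSpace ℂ (Fin n) → ℝ) (ξ : EuclideanSpace ℂ (Fin n)) :
    Continuous (leviForm ρ ξ) := by
  unfold leviForm
  fun_prop

end Levi

theorem levi_polynomial_estimate {n : ℕ} (Ω : Set (EuclideanSpace ℂ (Fin n)))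
    (hΩ : IsOpen Ω) (ρ : EuclideanSpace ℂ (Fin n) → ℝ) (hρ : ContDiffOn ℝ 2 ρ Ω)
    (ξ : EuclideanSpace ℂ (Fin n)) (hξ : ξ ∈ Ω)
    (hLevi : ∀ w : EuclideanSpace ℂ (Fin n), w ≠ 0 → 0 < leviForm ρ ξ w) :
    ∃ ε : ℝ, 0 < ε ∧ ε < 1 / 2 ∧ Metric.closedBall ξ (2 * ε) ⊆ Ω ∧
      ∀ z : EuclideanSpace ℂ (Fin n), ‖z - ξ‖ ≤ 2 * ε →
        (leviPoly ρ ξ z).re ≥ ρ ξ - ρ z + 2 * ε * ‖z - ξ‖ ^ 2 := by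
  obtain ⟨c, hc, hcoercive⟩ := exists_pos_mul_sq_norm_le_of_homogeneous
    (continuous_leviForm ρ ξ) (leviForm_smul ρ ξ) hLevi
  have htaylor := ((hρ.contDiffAt (hΩ.mem_nhds hξ)).isLittleO_taylor_two).bound (half_pos hc)
  obtain ⟨δ, hδ, hnear⟩ := Metric.eventually_nhds_iff.1 ((hΩ.eventually_mem hξ).and htaylor)
  set ε := min (min (c / 4) (δ / 4)) (1 / 4)
  have hεc : ε ≤ c / 4 := (min_le_left _ _).trans (min_le_left _ _)
  have hεδ : ε ≤ δ / 4 := (min_le_left _ _).trans (min_le_right _ _)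
  have hball : closedBall ξ (2 * ε) ⊆ ball ξ δ := closedBall_subset_ball (by linarith)
  refine ⟨ε, by positivity, (min_le_right _ _).trans_lt (by norm_num),
    fun z hz => (hnear (hball hz)).1, fun z hz => ?_⟩
  obtain ⟨-, hrem⟩ := hnear (hball (mem_closedBall_iff_norm.2 hz))
  rw [norm_pow, norm_norm, Real.norm_eq_abs, abs_le, smul_eq_mul] at hrem
  have hε : 2 * ε * ‖z - ξ‖ ^ 2 ≤ c / 2 * ‖z - ξ‖ ^ 2 := by gcongr; linarith
  rw [ge_iff_le, re_leviPoly]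
  linarith [hrem.1, hcoercive (z - ξ)]
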